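/- Let E be a real normed vector space, N ≥ 1 an integer, T > 0, h = T/N, and t_ℓ = ℓh. Given u⁰, u¹, …, u^N ∈ E and the piecewise affine interpolant u_N, suppose K ≥ 0 is such that h Σ_{ℓ=0}^{N−j} ‖u^{ℓ+j} − u^ℓ‖⁴ ≤ K (jh)² for every j ∈ {1,…,N}. Then sup_{0 < θ ≤ T} θ^{−1/2} ( ∫_θ^{T−θ} ‖u_N(s+θ) − u_N(s)‖⁴ ds )^{1/4} ≤ 8 K^{1/4}, where the integral is interpreted as 0 when θ > T − θ. -/

import Mathlib

/-!
On the cell `[a h, (a + 1) h]` the interpolant runs along the segment `[u a, u (a + 1)]`, so by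
convexity `‖u_N(s + θ) - u_N(s)‖` is at most some `‖u q - u p‖` with `p ∈ {a, a + 1}` and `q`
one of the two nodes around `s + θ`; thus `q - p` is within `2` of `J = ⌊θ / h⌋`. For `h ≤ θ`,
integrating over `s` cell by cell leaves at most five shifts `j`, each with `j h ≤ 3 θ`, and the
hypothesis bounds each of them, so the integral is at most `90 K θ²`. For `θ < h` this is too
crude; instead the increment is `θ / h` times at most one-step differences, which gives
`2 K θ²`. Both are below `8⁴ K θ²`.
-/

open MeasureTheory

/-- The piecewise affine interpolant of the values `u 0, …, u N` on the grid `tₗ = ℓ·h`: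
on `[t_{ℓ-1}, t_ℓ]` it equals `u (ℓ-1) + ((t - t_{ℓ-1})/h) • (u ℓ - u (ℓ-1))`. -/
noncomputable def affInterp {E : Type*} [NormedAddCommGroup E] [NormedSpace ℝ E]
    (N : ℕ) (h : ℝ) (u : ℕ → E) (t : ℝ) : E :=
  u (min (⌊t / h⌋₊) (N - 1)) +
    ((t - (min (⌊t / h⌋₊) (N - 1) : ℕ) * h) / h) •
      (u (min (⌊t / h⌋₊) (N - 1) + 1) - u (min (⌊t / h⌋₊) (N - 1)))

open Finset

lemma norm_smul_add_smul_pow_four_le {E : Type*} [SeminormedAddCommGroup E] [NormedSpace ℝ E]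
    {c d : ℝ} (hc : 0 ≤ c) (hd : 0 ≤ d) (v w : E) :
    ‖c • v + d • w‖ ^ 4 ≤ (c + d) ^ 4 * (‖v‖ ^ 4 + ‖w‖ ^ 4) := by
  have hmax : ‖c • v + d • w‖ ≤ (c + d) * max ‖v‖ ‖w‖ :=
    calc ‖c • v + d • w‖ ≤ c * ‖v‖ + d * ‖w‖ := by
          simpa [norm_smul, abs_of_nonneg hc, abs_of_nonneg hd] using norm_add_le (c • v) (d • w)
      _ ≤ (c + d) * max ‖v‖ ‖w‖ := by
          nlinarith [mul_le_mul_of_nonneg_left (le_max_left ‖v‖ ‖w‖) hc,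
            mul_le_mul_of_nonneg_left (le_max_right ‖v‖ ‖w‖) hd]
  have hmax4 : max ‖v‖ ‖w‖ ^ 4 ≤ ‖v‖ ^ 4 + ‖w‖ ^ 4 := by
    rcases le_total ‖v‖ ‖w‖ with hvw | hvw
    · rw [max_eq_right hvw]; exact le_add_of_nonneg_left (by positivity)
    · rw [max_eq_left hvw]; exact le_add_of_nonneg_right (by positivity)
  calc ‖c • v + d • w‖ ^ 4 ≤ ((c + d) * max ‖v‖ ‖w‖) ^ 4 := by gcongr
    _ ≤ (c + d) ^ 4 * (‖v‖ ^ 4 + ‖w‖ ^ 4) := by rw [mul_pow]; gcongr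

section Increments

variable {E : Type*} [SeminormedAddCommGroup E]

def incrFourth (N : ℕ) (u : ℕ → E) (j p : ℕ) : ℝ :=
  if p + j ≤ N then ‖u (p + j) - u p‖ ^ 4 else 0

lemma incrFourth_nonneg (N : ℕ) (u : ℕ → E) (j p : ℕ) : 0 ≤ incrFourth N u j p := by
  unfold incrFourth; split_ifs <;> positivity

lemma norm_sub_pow_four_le_incrFourth {N p q : ℕ} (u : ℕ → E) (hpq : p ≤ q) (hq : q ≤ N) :
    ‖u q - u p‖ ^ 4 ≤ incrFourth N u (q - p) p := by
  rw [incrFourth, if_pos (by omega), Nat.add_sub_cancel' hpq]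

lemma incrFourth_one_of_lt (u : ℕ → E) {N p : ℕ} (hp : p < N) :
    incrFourth N u 1 p = ‖u (p + 1) - u p‖ ^ 4 :=
  if_pos hp

lemma sum_incrFourth_le {N : ℕ} {h K : ℝ} {u : ℕ → E} (hK : 0 ≤ K)
    (hshift : ∀ j : ℕ, 1 ≤ j → j ≤ N →
      h * ∑ ℓ ∈ range (N - j + 1), ‖u (ℓ + j) - u ℓ‖ ^ 4 ≤ K * ((j : ℝ) * h) ^ 2) (j : ℕ) :
    h * ∑ p ∈ range (N + 1), incrFourth N u j p ≤ K * ((j : ℝ) * h) ^ 2 := by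
  unfold incrFourth
  rcases Nat.eq_zero_or_pos j with rfl | hj
  · simp
  by_cases hjN : j ≤ N
  · convert hshift j hj hjN using 2
    rw [← sum_filter]
    congr 1
    ext p
    simp only [mem_filter, mem_range]
    omega
  · rw [sum_eq_zero fun p _ => if_neg (by omega), mul_zero]
    positivity

lemma sum_incrFourth_cells_le {N : ℕ} {h K : ℝ} {u : ℕ → E} (hh : 0 ≤ h) (hK : 0 ≤ K)
    (hshift : ∀ j : ℕ, 1 ≤ j → j ≤ N →
      h * ∑ ℓ ∈ range (N - j + 1), ‖u (ℓ + j) - u ℓ‖ ^ 4 ≤ K * ((j : ℝ) * h) ^ 2) (j : ℕ) :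
    h * ∑ a ∈ range N, (incrFourth N u j a + incrFourth N u j (a + 1)) ≤
      2 * (K * ((j : ℝ) * h) ^ 2) := by
  have hleft : ∑ a ∈ range N, incrFourth N u j a ≤ ∑ p ∈ range (N + 1), incrFourth N u j p :=
    sum_le_sum_of_subset_of_nonneg (range_subset_range.2 N.le_succ)
      fun p _ _ => incrFourth_nonneg N u j p
  have hright : ∑ a ∈ range N, incrFourth N u j (a + 1) ≤
      ∑ p ∈ range (N + 1), incrFourth N u j p := by
    rw [sum_range_succ']
    exact le_add_of_nonneg_right (incrFourth_nonneg N u j 0)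
  have hall := sum_incrFourth_le hK hshift j
  rw [sum_add_distrib, mul_add, two_mul]
  exact add_le_add ((mul_le_mul_of_nonneg_left hleft hh).trans hall)
    ((mul_le_mul_of_nonneg_left hright hh).trans hall)

lemma norm_sub_pow_four_le_sum_window (u : ℕ → E) {N J a p q : ℕ} (hp : p = a ∨ p = a + 1)
    (ha : a < N) (haq : a ≤ q) (hqN : q ≤ N) (hlo : J + p ≤ q + 2) (hhi : q ≤ p + J + 2) :
    ‖u q - u p‖ ^ 4 ≤
      ∑ j ∈ Icc (J - 2) (J + 2), (incrFourth N u j a + incrFourth N u j (a + 1)) := by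
  obtain ⟨j, hj, r, hr, hle⟩ : ∃ j ∈ Icc (J - 2) (J + 2), ∃ r, (r = a ∨ r = a + 1) ∧
      ‖u q - u p‖ ^ 4 ≤ incrFourth N u j r := by
    by_cases hpq : p ≤ q
    · exact ⟨q - p, by rw [mem_Icc]; omega, p, hp, norm_sub_pow_four_le_incrFourth u hpq hqN⟩
    · obtain ⟨rfl, rfl⟩ : q = a ∧ p = a + 1 := by omega
      refine ⟨1, by rw [mem_Icc]; omega, q, Or.inl rfl, ?_⟩
      rw [norm_sub_rev, incrFourth_one_of_lt u (show q < N by omega)]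
  calc ‖u q - u p‖ ^ 4 ≤ incrFourth N u j r := hle
    _ ≤ incrFourth N u j a + incrFourth N u j (a + 1) := by
        rcases hr with rfl | rfl
        exacts [le_add_of_nonneg_right (incrFourth_nonneg N u j _),
          le_add_of_nonneg_left (incrFourth_nonneg N u j _)]
    _ ≤ _ := single_le_sum (f := fun j => incrFourth N u j a + incrFourth N u j (a + 1))
        (fun j _ => add_nonneg (incrFourth_nonneg N u j _) (incrFourth_nonneg N u j _)) hj

end Increments

lemma setIntegral_le_sum_of_le_on_cells {f : ℝ → ℝ} {G : ℕ → ℝ} {S : Set ℝ} {N : ℕ} {h : ℝ}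
    (hh : 0 < h) (hS : MeasurableSet S) (hSN : S ⊆ Set.Ico 0 (N * h))
    (hf : ∀ s ∈ S, 0 ≤ f s) (hG : ∀ a, 0 ≤ G a)
    (hfG : ∀ a < N, ∀ s ∈ S, s ∈ Set.Ico (a * h) ((a + 1) * h) → f s ≤ G a) :
    ∫ s in S, f s ≤ h * ∑ a ∈ range N, G a := by
  let φ : ℕ → ℝ → ℝ := fun a => (Set.Ico (a * h) ((a + 1) * h)).indicator fun _ => G a
  have hφ0 : ∀ a s, 0 ≤ φ a s := fun a => Set.indicator_nonneg fun _ _ => hG a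
  have hφ : ∀ a ∈ range N, Integrable (φ a) := fun a _ =>
    (integrable_indicator_iff measurableSet_Ico).2 (integrableOn_const measure_Ico_lt_top.ne)
  have hfφ : ∀ s ∈ S, f s ≤ ∑ a ∈ range N, φ a s := by
    intro s hs
    obtain ⟨hs0, hsN⟩ := hSN hs
    have ha : ⌊s / h⌋₊ < N := (Nat.floor_lt (by positivity)).2 ((div_lt_iff₀ hh).2 hsN)
    have hmem : s ∈ Set.Ico (⌊s / h⌋₊ * h) ((⌊s / h⌋₊ + 1) * h) :=
      ⟨(le_div_iff₀ hh).1 (Nat.floor_le (by positivity)),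
        (div_lt_iff₀ hh).1 (Nat.lt_floor_add_one _)⟩
    calc f s ≤ G ⌊s / h⌋₊ := hfG _ ha s hs hmem
      _ = φ ⌊s / h⌋₊ s := (Set.indicator_of_mem hmem fun _ => G ⌊s / h⌋₊).symm
      _ ≤ ∑ a ∈ range N, φ a s := single_le_sum (fun a _ => hφ0 a s) (mem_range.2 ha)
  have hsum : Integrable fun s => ∑ a ∈ range N, φ a s := integrable_finsetSum _ hφ
  calc ∫ s in S, f s ≤ ∫ s in S, ∑ a ∈ range N, φ a s :=
        integral_mono_of_nonneg (ae_restrict_of_forall_mem hS hf) hsum.integrableOn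
          (ae_restrict_of_forall_mem hS hfφ)
    _ ≤ ∫ s, ∑ a ∈ range N, φ a s :=
        setIntegral_le_integral hsum (ae_of_all _ fun s => sum_nonneg fun a _ => hφ0 a s)
    _ = h * ∑ a ∈ range N, G a := by
      rw [integral_finsetSum _ hφ, mul_sum]
      refine sum_congr rfl fun a _ => ?_
      rw [integral_indicator_const _ measurableSet_Ico, Measure.real, Real.volume_Ico,
        ENNReal.toReal_ofReal (by nlinarith), smul_eq_mul]
      ring

section Interpolant

variable {E : Type*} [NormedAddCommGroup E] [NormedSpace ℝ E] {N a : ℕ} {h : ℝ}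

lemma affInterp_eq_of_mem_Icc (u : ℕ → E) (hh : 0 < h) (ha : a < N) {t : ℝ}
    (ht : t ∈ Set.Icc (a * h) ((a + 1) * h)) :
    affInterp N h u t = u a + ((t - a * h) / h) • (u (a + 1) - u a) := by
  obtain ⟨hlo, hhi⟩ := ht
  have hfl_lo : a ≤ ⌊t / h⌋₊ := Nat.le_floor ((le_div_iff₀ hh).2 hlo)
  have hfl_hi : ⌊t / h⌋₊ ≤ a + 1 :=
    Nat.floor_le_of_le (by push_cast; exact (div_le_iff₀ hh).2 hhi)
  unfold affInterp
  rcases (by omega : min ⌊t / h⌋₊ (N - 1) = a ∨ min ⌊t / h⌋₊ (N - 1) = a + 1) with hk | hk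
  · rw [hk]
  -- `t` is the node `(a + 1) h`, where the formula of the next cell also gives `u (a + 1)`
  · have hnode : t = (a + 1) * h := by
      refine le_antisymm hhi ((le_div_iff₀ hh).1 ?_)
      calc ((a : ℝ) + 1) = ((a + 1 : ℕ) : ℝ) := by push_cast; ring
        _ ≤ ⌊t / h⌋₊ := by exact_mod_cast (by omega : a + 1 ≤ ⌊t / h⌋₊)
        _ ≤ t / h := Nat.floor_le (div_nonneg ((by positivity : (0 : ℝ) ≤ a * h).trans hlo) hh.le)
    rw [hk, hnode]
    push_cast
    rw [sub_self, zero_div, zero_smul, add_zero,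
      show ((a + 1) * h - a * h) / h = 1 by field_simp; ring, one_smul, add_sub_cancel]

lemma affInterp_sub_of_mem_Icc (u : ℕ → E) (hh : 0 < h) (ha : a < N) {s t : ℝ}
    (hs : s ∈ Set.Icc (a * h) ((a + 1) * h)) (ht : t ∈ Set.Icc (a * h) ((a + 1) * h)) :
    affInterp N h u t - affInterp N h u s = ((t - s) / h) • (u (a + 1) - u a) := by
  rw [affInterp_eq_of_mem_Icc u hh ha ht, affInterp_eq_of_mem_Icc u hh ha hs]
  module

lemma affInterp_mem_segment (u : ℕ → E) (hh : 0 < h) (ha : a < N) {t : ℝ}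
    (ht : t ∈ Set.Icc (a * h) ((a + 1) * h)) :
    affInterp N h u t ∈ segment ℝ (u a) (u (a + 1)) := by
  rw [segment_eq_image', affInterp_eq_of_mem_Icc u hh ha ht]
  exact ⟨_, ⟨div_nonneg (by linarith [ht.1]) hh.le, (div_le_one hh).2 (by linarith [ht.2])⟩, rfl⟩

lemma exists_cell_of_le (hh : 0 < h) (ha : a < N) {t : ℝ} (hat : a * h ≤ t) (htN : t ≤ N * h) :
    ∃ b, a ≤ b ∧ b < N ∧ t ∈ Set.Icc (b * h) ((b + 1) * h) := by
  have hfl : a ≤ ⌊t / h⌋₊ := Nat.le_floor ((le_div_iff₀ hh).2 hat)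
  have ht0 : 0 ≤ t / h := div_nonneg ((by positivity : (0 : ℝ) ≤ a * h).trans hat) hh.le
  refine ⟨min ⌊t / h⌋₊ (N - 1), by omega, by omega, ?_, ?_⟩
  · calc (min ⌊t / h⌋₊ (N - 1) : ℕ) * h ≤ ⌊t / h⌋₊ * h := by gcongr; exact min_le_left _ _
      _ ≤ t := (le_div_iff₀ hh).1 (Nat.floor_le ht0)
  · rcases min_cases ⌊t / h⌋₊ (N - 1) with ⟨hmin, _⟩ | ⟨hmin, _⟩ <;> rw [hmin]
    · exact ((div_le_iff₀ hh).1 (Nat.lt_floor_add_one _).le)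
    · rwa [Nat.cast_sub (by omega), Nat.cast_one, sub_add_cancel]

lemma norm_affInterp_shift_pow_four_le_of_le (u : ℕ → E) (hh : 0 < h) (ha : a < N) {s θ : ℝ}
    (hθ : 0 ≤ θ) (hθh : θ ≤ h) (hs : s ∈ Set.Icc (a * h) ((a + 1) * h)) (hsθ : s + θ ≤ N * h) :
    ‖affInterp N h u (s + θ) - affInterp N h u s‖ ^ 4 ≤
      (θ / h) ^ 4 * (incrFourth N u 1 a + incrFourth N u 1 (a + 1)) := by
  have hθh0 : 0 ≤ θ / h := div_nonneg hθ hh.le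
  rcases le_or_gt (s + θ) ((a + 1) * h) with hin | hout
  · rw [affInterp_sub_of_mem_Icc u hh ha hs ⟨by linarith [hs.1], hin⟩, add_sub_cancel_left,
      norm_smul, mul_pow, Real.norm_of_nonneg hθh0, incrFourth_one_of_lt u ha]
    gcongr
    exact le_add_of_nonneg_right (incrFourth_nonneg N u 1 (a + 1))
  · have ha1 : a + 1 < N := by
      have : ((a + 1 : ℕ) : ℝ) < N := by push_cast; nlinarith [hs.2]
      exact_mod_cast this
    have hnode : ((a + 1 : ℕ) : ℝ) * h = (a + 1) * h := by push_cast; ring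
    have hleft := affInterp_sub_of_mem_Icc u hh ha hs (t := (a + 1) * h)
      ⟨by linarith [hs.1, hs.2], le_rfl⟩
    have hright := affInterp_sub_of_mem_Icc u hh ha1 (s := (a + 1) * h) (t := s + θ)
      ⟨hnode.le, by push_cast; linarith⟩
      ⟨by rw [hnode]; exact hout.le, by push_cast; linarith [hs.2]⟩
    have hsplit : affInterp N h u (s + θ) - affInterp N h u s =
        (((a + 1) * h - s) / h) • (u (a + 1) - u a) +
          ((s + θ - (a + 1) * h) / h) • (u (a + 1 + 1) - u (a + 1)) := by
      rw [← hleft, ← hright]; abel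
    have hcoef : ((a + 1) * h - s) / h + (s + θ - (a + 1) * h) / h = θ / h := by ring
    rw [hsplit]
    refine (norm_smul_add_smul_pow_four_le (div_nonneg (by linarith [hs.2]) hh.le)
      (div_nonneg (by linarith) hh.le) _ _).trans ?_
    rw [hcoef, incrFourth_one_of_lt u ha, incrFourth_one_of_lt u ha1]

lemma exists_norm_affInterp_sub_le (u : ℕ → E) (hh : 0 < h) {b : ℕ} (ha : a < N) (hb : b < N)
    {s t : ℝ} (hs : s ∈ Set.Icc (a * h) ((a + 1) * h)) (ht : t ∈ Set.Icc (b * h) ((b + 1) * h)) :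
    ∃ p q, (p = a ∨ p = a + 1) ∧ (q = b ∨ q = b + 1) ∧
      ‖affInterp N h u t - affInterp N h u s‖ ≤ ‖u q - u p‖ := by
  obtain ⟨x, hx, y, hy, hxy⟩ := convexHull_exists_dist_ge2 (s := {u b, u (b + 1)})
    (t := {u a, u (a + 1)}) (by rw [convexHull_pair]; exact affInterp_mem_segment u hh hb ht)
    (by rw [convexHull_pair]; exact affInterp_mem_segment u hh ha hs)
  rw [dist_eq_norm, dist_eq_norm] at hxy
  obtain ⟨q, hq, rfl⟩ : ∃ q, (q = b ∨ q = b + 1) ∧ u q = x := by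
    rcases hx with rfl | rfl
    exacts [⟨b, .inl rfl, rfl⟩, ⟨b + 1, .inr rfl, rfl⟩]
  obtain ⟨p, hp, rfl⟩ : ∃ p, (p = a ∨ p = a + 1) ∧ u p = y := by
    rcases hy with rfl | rfl
    exacts [⟨a, .inl rfl, rfl⟩, ⟨a + 1, .inr rfl, rfl⟩]
  exact ⟨p, q, hp, hq, hxy⟩

lemma norm_affInterp_shift_pow_four_le_sum_window (u : ℕ → E) (hh : 0 < h) (ha : a < N)
    {s θ : ℝ} (hθ : 0 ≤ θ) (hs : s ∈ Set.Icc (a * h) ((a + 1) * h)) (hsθ : s + θ ≤ N * h) :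
    ‖affInterp N h u (s + θ) - affInterp N h u s‖ ^ 4 ≤
      ∑ j ∈ Icc (⌊θ / h⌋₊ - 2) (⌊θ / h⌋₊ + 2),
        (incrFourth N u j a + incrFourth N u j (a + 1)) := by
  set J := ⌊θ / h⌋₊
  have hJ : J * h ≤ θ := (le_div_iff₀ hh).1 (Nat.floor_le (div_nonneg hθ hh.le))
  have hJ' : θ < (J + 1) * h := (div_lt_iff₀ hh).1 (Nat.lt_floor_add_one _)
  obtain ⟨b, hab, hb, hbt⟩ := exists_cell_of_le hh ha (by linarith [hs.1]) hsθ
  have hlo : J + a ≤ b + 1 := by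
    have : ((J + a : ℕ) : ℝ) * h ≤ ((b + 1 : ℕ) : ℝ) * h := by push_cast; linarith [hbt.2, hs.1]
    exact_mod_cast le_of_mul_le_mul_right this hh
  have hhi : b < a + J + 2 := by
    have : (b : ℝ) * h < ((a + J + 2 : ℕ) : ℝ) * h := by push_cast; linarith [hbt.1, hs.2]
    exact_mod_cast lt_of_mul_lt_mul_right this hh.le
  obtain ⟨p, q, hp, hq, hnorm⟩ := exists_norm_affInterp_sub_le u hh ha hb hs hbt
  calc _ ≤ ‖u q - u p‖ ^ 4 := by gcongr
    _ ≤ _ := norm_sub_pow_four_le_sum_window u hp ha (by omega) (by omega) (by omega) (by omega)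

end Interpolant

section Integral

variable {E : Type*} [NormedAddCommGroup E] [NormedSpace ℝ E] {N : ℕ} {h K θ : ℝ} {u : ℕ → E}

lemma integral_affInterp_shift_le_of_le (hh : 0 < h) (hθ : 0 < θ) (hθh : θ ≤ h) (hK : 0 ≤ K)
    (hshift : ∀ j : ℕ, 1 ≤ j → j ≤ N →
      h * ∑ ℓ ∈ range (N - j + 1), ‖u (ℓ + j) - u ℓ‖ ^ 4 ≤ K * ((j : ℝ) * h) ^ 2) :
    ∫ s in Set.Ioc θ (N * h - θ), ‖affInterp N h u (s + θ) - affInterp N h u s‖ ^ 4 ≤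
      2 * K * θ ^ 2 := by
  calc _ ≤ h * ∑ a ∈ range N, (θ / h) ^ 4 * (incrFourth N u 1 a + incrFourth N u 1 (a + 1)) :=
        setIntegral_le_sum_of_le_on_cells hh measurableSet_Ioc
          (fun s hs => ⟨by linarith [hs.1], by linarith [hs.2]⟩) (fun _ _ => by positivity)
          (fun a => mul_nonneg (by positivity)
            (add_nonneg (incrFourth_nonneg N u 1 a) (incrFourth_nonneg N u 1 (a + 1))))
          fun a ha s hs hsa => norm_affInterp_shift_pow_four_le_of_le u hh ha hθ.le hθh
            (Set.Ico_subset_Icc_self hsa) (by linarith [hs.2])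
    _ = (θ / h) ^ 4 * (h * ∑ a ∈ range N, (incrFourth N u 1 a + incrFourth N u 1 (a + 1))) := by
        rw [← mul_sum]; ring
    _ ≤ (θ / h) ^ 4 * (2 * (K * ((1 : ℕ) * h) ^ 2)) :=
        mul_le_mul_of_nonneg_left (sum_incrFourth_cells_le hh.le hK hshift 1) (by positivity)
    _ = 2 * K * θ ^ 2 * (θ / h) ^ 2 := by field_simp; ring
    _ ≤ 2 * K * θ ^ 2 := mul_le_of_le_one_right (by positivity)
        (pow_le_one₀ (by positivity) ((div_le_one hh).2 hθh))

lemma integral_affInterp_shift_le_of_ge (hh : 0 < h) (hhθ : h ≤ θ) (hK : 0 ≤ K)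
    (hshift : ∀ j : ℕ, 1 ≤ j → j ≤ N →
      h * ∑ ℓ ∈ range (N - j + 1), ‖u (ℓ + j) - u ℓ‖ ^ 4 ≤ K * ((j : ℝ) * h) ^ 2) :
    ∫ s in Set.Ioc θ (N * h - θ), ‖affInterp N h u (s + θ) - affInterp N h u s‖ ^ 4 ≤
      90 * K * θ ^ 2 := by
  set W := Icc (⌊θ / h⌋₊ - 2) (⌊θ / h⌋₊ + 2)
  have hW : ∀ j ∈ W, (j : ℝ) * h ≤ 3 * θ := by
    intro j hj
    have hJ : (⌊θ / h⌋₊ : ℝ) * h ≤ θ :=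
      (le_div_iff₀ hh).1 (Nat.floor_le (div_nonneg (by linarith) hh.le))
    have hj' : (j : ℝ) ≤ ⌊θ / h⌋₊ + 2 := by exact_mod_cast (mem_Icc.1 hj).2
    nlinarith
  have hcard : (#W : ℝ) ≤ 5 := by
    have : #W ≤ 5 := by rw [Nat.card_Icc]; omega
    exact_mod_cast this
  calc _ ≤ h * ∑ a ∈ range N, ∑ j ∈ W, (incrFourth N u j a + incrFourth N u j (a + 1)) :=
        setIntegral_le_sum_of_le_on_cells hh measurableSet_Ioc
          (fun s hs => ⟨by linarith [hs.1], by linarith [hs.2]⟩) (fun _ _ => by positivity)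
          (fun a => sum_nonneg fun j _ =>
            add_nonneg (incrFourth_nonneg N u j a) (incrFourth_nonneg N u j (a + 1)))
          fun a ha s hs hsa => norm_affInterp_shift_pow_four_le_sum_window u hh ha
            (by linarith) (Set.Ico_subset_Icc_self hsa) (by linarith [hs.2])
    _ = ∑ j ∈ W, h * ∑ a ∈ range N, (incrFourth N u j a + incrFourth N u j (a + 1)) := by
        rw [sum_comm, mul_sum]
    _ ≤ ∑ j ∈ W, 2 * (K * (3 * θ) ^ 2) := sum_le_sum fun j hj =>
        (sum_incrFourth_cells_le hh.le hK hshift j).trans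
          (by gcongr 2 * (K * ?_ ^ 2); exact hW j hj)
    _ = #W * (18 * K * θ ^ 2) := by rw [sum_const, nsmul_eq_mul]; ring
    _ ≤ 5 * (18 * K * θ ^ 2) := by gcongr
    _ = 90 * K * θ ^ 2 := by ring

end Integral

lemma rpow_neg_half_mul_rpow_quarter_le {θ I K c : ℝ} (hθ : 0 < θ) (hI : 0 ≤ I) (hK : 0 ≤ K)
    (hc : 0 ≤ c) (hIle : I ≤ c ^ 4 * K * θ ^ 2) :
    θ ^ (-(1 : ℝ) / 2) * I ^ ((1 : ℝ) / 4) ≤ c * K ^ ((1 : ℝ) / 4) := by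
  have hroot : (c ^ 4 * K * θ ^ 2) ^ ((1 : ℝ) / 4) = c * K ^ ((1 : ℝ) / 4) * θ ^ ((1 : ℝ) / 2) := by
    rw [Real.mul_rpow (by positivity) (by positivity), Real.mul_rpow (by positivity) hK,
      show (1 : ℝ) / 4 = ((4 : ℕ) : ℝ)⁻¹ by norm_num, Real.pow_rpow_inv_natCast hc (by norm_num),
      ← Real.rpow_natCast θ 2, ← Real.rpow_mul hθ.le]
    norm_num
  calc θ ^ (-(1 : ℝ) / 2) * I ^ ((1 : ℝ) / 4)
      ≤ θ ^ (-(1 : ℝ) / 2) * (c * K ^ ((1 : ℝ) / 4) * θ ^ ((1 : ℝ) / 2)) := by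
        rw [← hroot]; gcongr
    _ = c * K ^ ((1 : ℝ) / 4) := by
        rw [mul_comm, mul_assoc, ← Real.rpow_add hθ]; norm_num

/-- Nikolskii-type time-regularity bound: if
`h Σ_{ℓ=0}^{N−j} ‖u(ℓ+j) − uℓ‖⁴ ≤ K (jh)²` for every `j ∈ {1,…,N}`, then
`θ^{−1/2} (∫_θ^{T−θ} ‖u_N(s+θ) − u_N(s)‖⁴ ds)^{1/4} ≤ 8 K^{1/4}` for all `0 < θ ≤ T`,
the integral (over `Ioc θ (T−θ)`) being `0` when `θ > T − θ`. -/
theorem affInterp_nikolskii_bound {E : Type*}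
    [NormedAddCommGroup E] [NormedSpace ℝ E]
    (N : ℕ) (hN : 1 ≤ N) (T : ℝ) (hT : 0 < T) (h : ℝ) (hh : h = T / N) (u : ℕ → E)
    (K : ℝ) (hK : 0 ≤ K)
    (hshift : ∀ j : ℕ, 1 ≤ j → j ≤ N →
      h * ∑ ℓ ∈ Finset.range (N - j + 1), ‖u (ℓ + j) - u ℓ‖ ^ 4 ≤ K * ((j : ℝ) * h) ^ 2) :
    ∀ θ : ℝ, 0 < θ → θ ≤ T →
      θ ^ (-(1 : ℝ) / 2) *
          (∫ s in Set.Ioc θ (T - θ),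
              ‖affInterp N h u (s + θ) - affInterp N h u s‖ ^ 4) ^ ((1 : ℝ) / 4) ≤
        8 * K ^ ((1 : ℝ) / 4) := by
  intro θ hθ _
  have hN' : (0 : ℝ) < N := by exact_mod_cast hN
  have hh0 : 0 < h := hh ▸ div_pos hT hN'
  have hTN : T = N * h := by rw [hh]; field_simp
  have hKθ : 0 ≤ K * θ ^ 2 := by positivity
  rw [hTN]
  refine rpow_neg_half_mul_rpow_quarter_le hθ (integral_nonneg fun _ => by positivity) hK
    (by norm_num) ?_
  rcases le_total θ h with hθh | hθh
  · linarith [integral_affInterp_shift_le_of_le hh0 hθ hθh hK hshift]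
  · linarith [integral_affInterp_shift_le_of_ge hh0 hθh hK hshift]
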